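/- Let T > R > P > S, χ > 1, and let p be the extortionate strategy p₁ = 1 − φ(χ−1)(R−P)/(P−S), p₂ = 1 − φ(1+χ(T−P)/(P−S)), p₃ = φ(χ+(T−P)/(P−S)), p₄ = 0 with φ > 0 valid. If Y always cooperates (q = (1,1,1,1)), the resulting score of X is s_x = ((1−p₁)T + R·p₃)/((1−p₁) + p₃) = (P(T−R) + χ(R(T−S) − P(T−R)))/((T−R) + χ(R−S)). -/

import Mathlib

/-! Against `q = 𝟙` the first column of `pdMatrix` minus the second is the unit vector `e₂`, so the
determinant collapses to a `2 × 2` minor in `p₁, p₃` alone; substituting the extortionate `p`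
then multiplies numerator and denominator by the same factor `φ / (P - S)`. -/

open Matrix

def pdMatrix (p q f : Fin 4 → ℝ) : Matrix (Fin 4) (Fin 4) ℝ :=
  !![p 0 * q 0 - 1, p 0 - 1, q 0 - 1, f 0;
     p 1 * q 2,     p 1 - 1, q 2,     f 1;
     p 2 * q 1,     p 2,     q 1 - 1, f 2;
     p 3 * q 3,     p 3,     q 3,     f 3]

theorem det_pdMatrix_const_one (p f : Fin 4 → ℝ) :
    (pdMatrix p (fun _ => 1) f).det = -((1 - p 0) * f 2 + f 0 * p 2) := by
  rw [det_succ_row_zero]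
  simp [pdMatrix, Fin.sum_univ_succ, det_fin_three, Fin.succAbove]
  ring

theorem det_pdMatrix_div_const_one (p f : Fin 4 → ℝ) :
    (pdMatrix p (fun _ => 1) f).det / (pdMatrix p (fun _ => 1) (fun _ => 1)).det
      = ((1 - p 0) * f 2 + f 0 * p 2) / ((1 - p 0) + p 2) := by
  rw [det_pdMatrix_const_one, det_pdMatrix_const_one, neg_div_neg_eq]
  ring_nf

theorem extortionate_score_eq {T R P S χ φ p₁ p₃ : ℝ} (hPS : P ≠ S) (hφ : φ ≠ 0)
    (hp₁ : 1 - p₁ = φ * (χ - 1) * (R - P) / (P - S)) (hp₃ : p₃ = φ * (χ + (T - P) / (P - S))) :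
    ((1 - p₁) * T + R * p₃) / ((1 - p₁) + p₃)
      = (P * (T - R) + χ * (R * (T - S) - P * (T - R))) / ((T - R) + χ * (R - S)) := by
  have hPS' : P - S ≠ 0 := sub_ne_zero.mpr hPS
  have hnum : (1 - p₁) * T + R * p₃
      = φ / (P - S) * (P * (T - R) + χ * (R * (T - S) - P * (T - R))) := by
    rw [hp₁, hp₃]; field_simp; ring
  have hden : (1 - p₁) + p₃ = φ / (P - S) * ((T - R) + χ * (R - S)) := by
    rw [hp₁, hp₃]; field_simp; ring
  rw [hnum, hden, mul_div_mul_left _ _ (div_ne_zero hφ hPS')]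

theorem extortioner_score_vs_cooperator_general (T R P S χ φ : ℝ)
    (hPS : P > S) (hφ : 0 < φ) :
    let p : Fin 4 → ℝ := ![1 - φ * (χ - 1) * (R - P) / (P - S),
      1 - φ * (1 + χ * (T - P) / (P - S)), φ * (χ + (T - P) / (P - S)), 0]
    let one : Fin 4 → ℝ := fun _ => 1
    let Sx : Fin 4 → ℝ := ![R, S, T, P]
    (pdMatrix p one Sx).det / (pdMatrix p one one).det
        = ((1 - p 0) * T + R * p 2) / ((1 - p 0) + p 2) ∧
    (pdMatrix p one Sx).det / (pdMatrix p one one).det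
        = (P * (T - R) + χ * (R * (T - S) - P * (T - R)))
            / ((T - R) + χ * (R - S)) := by
  intro p one Sx
  have hscore : (pdMatrix p one Sx).det / (pdMatrix p one one).det
      = ((1 - p 0) * T + R * p 2) / ((1 - p 0) + p 2) :=
    det_pdMatrix_div_const_one p Sx
  exact ⟨hscore, hscore.trans (extortionate_score_eq hPS.ne' hφ.ne' (sub_sub_cancel _ _) rfl)⟩

/-- Score of the extortioner X against a full cooperator Y. -/
theorem extortioner_score_vs_cooperator (T R P S χ φ : ℝ)
    (hTR : T > R) (hRP : R > P) (hPS : P > S) (hχ : 1 < χ) (hφ : 0 < φ)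
    (hvalid :
      (1 - φ * (χ - 1) * (R - P) / (P - S)) ∈ Set.Icc (0 : ℝ) 1 ∧
      (1 - φ * (1 + χ * (T - P) / (P - S))) ∈ Set.Icc (0 : ℝ) 1 ∧
      (φ * (χ + (T - P) / (P - S))) ∈ Set.Icc (0 : ℝ) 1) :
    let p : Fin 4 → ℝ := ![1 - φ * (χ - 1) * (R - P) / (P - S),
      1 - φ * (1 + χ * (T - P) / (P - S)), φ * (χ + (T - P) / (P - S)), 0]
    let one : Fin 4 → ℝ := fun _ => 1
    let Sx : Fin 4 → ℝ := ![R, S, T, P]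
    (pdMatrix p one Sx).det / (pdMatrix p one one).det
        = ((1 - p 0) * T + R * p 2) / ((1 - p 0) + p 2) ∧
    (pdMatrix p one Sx).det / (pdMatrix p one one).det
        = (P * (T - R) + χ * (R * (T - S) - P * (T - R)))
            / ((T - R) + χ * (R - S)) :=
  extortioner_score_vs_cooperator_general T R P S χ φ hPS hφ
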